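/- arXiv:2506.07098 — 7 statements merged into one kernel-verified Lean document; each statement's English description precedes it below -/
import Mathlib

section
/- Let K be a field, f a monic polynomial of positive degree in K[X], and A = K[X]/(f) the quotient algebra. Then the trace form of A over K is nondegenerate (equivalently, the discriminant of the power basis (1, x, ..., x^{deg f - 1}) of A over K is nonzero) if and only if the polynomial f is separable. -/
/-!
Factor `f` into irreducibles. If a non-unit `q` has `q ^ 2 ∣ f`, then `f / q` is a nonzero
nilpotent of `K[X]/(f)`; nilpotents lie in the radical of the trace form, so the form is
degenerate, while `f` is not even squarefree. Otherwise, peeling off an irreducible factor `p`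
coprime to the rest `a`, the Chinese remainder theorem splits `K[X]/(pa)` as
`K[X]/(p) × K[X]/(a)`, whose trace form is the orthogonal sum of the two trace forms, and
`pa` is separable iff `p` and `a` are. For irreducible `p`, `K[X]/(p)` is a field generated by a
root of `p`, and the trace form of a finite field extension is nondegenerate exactly when the
extension is separable.
-/

open Polynomial

namespace Algebra

variable {R A B : Type*} [CommRing R] [CommRing A] [CommRing B] [Algebra R A] [Algebra R B]

theorem traceForm_nondegenerate_iff_separatingLeft :
    (traceForm R A).Nondegenerate ↔ (traceForm R A).SeparatingLeft :=
  LinearMap.IsRefl.nondegenerate_iff_separatingLeft fun x y h => by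
    rwa [traceForm_apply, mul_comm, ← traceForm_apply]

theorem traceForm_nondegenerate_congr (e : A ≃ₐ[R] B) :
    (traceForm R A).Nondegenerate ↔ (traceForm R B).Nondegenerate := by
  have : traceForm R B = LinearMap.BilinForm.congr e.toLinearEquiv (traceForm R A) := by
    ext x y
    simp [← trace_eq_of_algEquiv e]
  rw [this, LinearMap.BilinForm.nondegenerate_congr_iff]

theorem traceForm_prod_nondegenerate_iff [Module.Free R A] [Module.Free R B] [Module.Finite R A]
    [Module.Finite R B] :
    (traceForm R (A × B)).Nondegenerate ↔
      (traceForm R A).Nondegenerate ∧ (traceForm R B).Nondegenerate := by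
  simp only [traceForm_nondegenerate_iff_separatingLeft, LinearMap.SeparatingLeft, traceForm_apply]
  constructor
  · intro h
    refine ⟨fun a ha => ?_, fun b hb => ?_⟩
    · simpa using h (a, 0) fun x => by simpa using ha x.1
    · simpa using h (0, b) fun x => by simpa using hb x.2
  · rintro ⟨hA, hB⟩ x hx
    exact Prod.ext (hA _ fun a => by simpa using hx (a, 0)) (hB _ fun b => by simpa using hx (0, b))

theorem not_traceForm_nondegenerate_of_isNilpotent [IsReduced R] {a : A} (ha : IsNilpotent a)
    (ha0 : a ≠ 0) : ¬(traceForm R A).Nondegenerate := fun h =>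
  ha0 <| h.1 a fun b =>
    (isNilpotent_trace_of_isNilpotent ((Commute.all a b).isNilpotent_mul_right ha)).eq_zero

end Algebra

namespace AdjoinRoot

section CommRing

variable {R : Type*} [CommRing R]

noncomputable def algEquivProdOfIsCoprime {g h : R[X]} (hgh : IsCoprime g h) :
    AdjoinRoot (g * h) ≃ₐ[R] AdjoinRoot g × AdjoinRoot h :=
  AlgEquiv.ofRingEquiv (f := (Ideal.quotEquivOfEq
      (Ideal.span_singleton_mul_span_singleton g h).symm).trans
      (Ideal.quotientMulEquivQuotientProd _ _ ((Ideal.isCoprime_span_singleton_iff g h).mpr hgh)))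
    fun _ => rfl

theorem traceForm_nondegenerate_of_isUnit {u : R[X]} (hu : IsUnit u) :
    (Algebra.traceForm R (AdjoinRoot u)).Nondegenerate := by
  have : Subsingleton (AdjoinRoot u) :=
    subsingleton_of_zero_eq_one ((mk_eq_zero.mpr hu.dvd).symm.trans (map_one _))
  exact ⟨fun m _ => Subsingleton.elim m 0, fun m _ => Subsingleton.elim m 0⟩

theorem not_moduleFinite_zero [Nontrivial R] : ¬Module.Finite R (AdjoinRoot (0 : R[X])) := by
  intro _
  obtain ⟨p, hp, hroot⟩ := Algebra.IsIntegral.isIntegral (R := R) (root (0 : R[X]))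
  rw [← aeval_def, aeval_eq, mk_eq_zero, zero_dvd_iff] at hroot
  exact hp.ne_zero hroot

-- `Algebra.trace` is zero on modules without a finite basis, such as `AdjoinRoot 0 = R[X]`.
theorem not_traceForm_nondegenerate_zero [Nontrivial R] :
    ¬(Algebra.traceForm R (AdjoinRoot (0 : R[X]))).Nondegenerate := by
  have htrace : Algebra.trace R (AdjoinRoot (0 : R[X])) = 0 :=
    Algebra.trace_eq_zero_of_not_exists_basis R fun ⟨_, ⟨b⟩⟩ =>
      not_moduleFinite_zero (Module.Finite.of_basis b)
  intro h
  have h1 : (1 : AdjoinRoot (0 : R[X])) = 0 := h.1 1 fun n => by simp [htrace]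
  rw [← map_one (mk 0), mk_eq_zero, zero_dvd_iff] at h1
  exact one_ne_zero h1

theorem squarefree_of_traceForm_nondegenerate [IsDomain R] {f : R[X]} (hf : f ≠ 0)
    (h : (Algebra.traceForm R (AdjoinRoot f)).Nondegenerate) : Squarefree f := by
  rintro q ⟨s, rfl⟩
  have hqs : q * s ≠ 0 := right_ne_zero_of_mul (by rwa [mul_assoc] at hf)
  by_contra hq
  refine Algebra.not_traceForm_nondegenerate_of_isNilpotent (a := mk _ (q * s)) ⟨2, ?_⟩ ?_ h
  · rw [← map_pow, mk_eq_zero]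
    exact ⟨s, by ring⟩
  · rw [Ne, mk_eq_zero, mul_assoc]
    exact fun hdvd => hq (isUnit_of_dvd_one ((mul_dvd_mul_iff_right hqs).mp (by simpa using hdvd)))

end CommRing

variable {K : Type*} [Field K]

theorem traceForm_nondegenerate_mul_iff {g h : K[X]} (hg : g ≠ 0) (hh : h ≠ 0)
    (hgh : IsCoprime g h) :
    (Algebra.traceForm K (AdjoinRoot (g * h))).Nondegenerate ↔
      (Algebra.traceForm K (AdjoinRoot g)).Nondegenerate ∧
        (Algebra.traceForm K (AdjoinRoot h)).Nondegenerate := by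
  have := (powerBasis hg).finite
  have := (powerBasis hh).finite
  rw [Algebra.traceForm_nondegenerate_congr (algEquivProdOfIsCoprime hgh),
    Algebra.traceForm_prod_nondegenerate_iff]

theorem traceForm_nondegenerate_iff_of_irreducible {f : K[X]} (hf : Irreducible f) :
    (Algebra.traceForm K (AdjoinRoot f)).Nondegenerate ↔ f.Separable := by
  have := Fact.mk hf
  have := (powerBasis hf.ne_zero).finite
  have hsep := (traceForm_nondegenerate_tfae K (AdjoinRoot f)).out 0 2
  rw [← hsep, ← separableClosure.eq_top_iff, eq_top_iff, ← IntermediateField.adjoin_root_eq_top,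
    IntermediateField.adjoin_simple_le_iff, mem_separableClosure_iff, IsSeparable,
    minpoly_root hf.ne_zero]
  have hlc : IsUnit (C f.leadingCoeff⁻¹) := isUnit_C.mpr (by simpa using hf.ne_zero)
  exact (associated_mul_unit_right f _ hlc).separable_iff.symm

end AdjoinRoot

theorem stmt0_general {K : Type*} [Field K] (f : Polynomial K) :
    (Algebra.traceForm K (AdjoinRoot f)).Nondegenerate ↔ f.Separable := by
  induction f using WfDvdMonoid.induction_on_irreducible with
  | zero => exact iff_of_false AdjoinRoot.not_traceForm_nondegenerate_zero not_separable_zero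
  | unit u hu =>
    exact iff_of_true (AdjoinRoot.traceForm_nondegenerate_of_isUnit hu)
      ((associated_one_iff_isUnit.mpr hu).symm.separable separable_one)
  | mul a p ha hp ih =>
    by_cases hpa : p ∣ a
    · have hsq : ¬Squarefree (p * a) := fun h => hp.not_isUnit (h p (mul_dvd_mul_left p hpa))
      exact iff_of_false
        (mt (AdjoinRoot.squarefree_of_traceForm_nondegenerate (mul_ne_zero hp.ne_zero ha)) hsq)
        (mt Separable.squarefree hsq)
    · have hcop : IsCoprime p a := hp.coprime_iff_not_dvd.mpr hpa
      rw [AdjoinRoot.traceForm_nondegenerate_mul_iff hp.ne_zero ha hcop,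
        AdjoinRoot.traceForm_nondegenerate_iff_of_irreducible hp, ih]
      exact ⟨fun h => h.1.mul h.2 hcop, fun h => ⟨h.of_mul_left, h.of_mul_right⟩⟩

/-- Let `K` be a field, `f` a monic polynomial of positive degree in `K[X]`, and
`A = K[X]/(f)` the quotient algebra. Then the trace form of `A` over `K` is
nondegenerate if and only if `f` is separable. -/
theorem stmt0 {K : Type*} [Field K] (f : Polynomial K) (hf : f.Monic)
    (hdeg : 0 < f.natDegree) :
    (Algebra.traceForm K (AdjoinRoot f)).Nondegenerate ↔ f.Separable :=
  stmt0_general f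
end

section
/- Let K be a field and B a commutative K-algebra that is finite-dimensional as a K-vector space, with dimension n = [B : K]. Suppose either K has characteristic zero, or K has prime characteristic p with p > n. If B is reduced, then the trace form of B over K is nondegenerate. -/
/-!
A finite-dimensional reduced commutative algebra is semisimple, so every ideal is generated by
an idempotent. If `x` lies in the radical of the trace form and `e` generates `(x)`, then
`e ∈ (x)` forces `Tr e = 0`. But multiplication by `e` is a projection onto `eB`, so `Tr e` is
the image in `K` of `dim eB`, an integer between `1` and `[B : K]` when `e ≠ 0`; the
characteristic assumption makes it nonzero, hence `e = 0` and `x = 0`.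
-/

open Module

section Idempotent

variable {K B : Type*} [Field K] [CommRing B] [Algebra K B] [FiniteDimensional K B]

theorem Algebra.trace_eq_finrank_range_of_isIdempotentElem {e : B} (he : IsIdempotentElem e) :
    Algebra.trace K B e = finrank K (LinearMap.range (Algebra.lmul K B e)) := by
  have hproj : LinearMap.IsProj (LinearMap.range (Algebra.lmul K B e)) (Algebra.lmul K B e) :=
    ⟨LinearMap.mem_range_self _, by
      rintro _ ⟨z, rfl⟩
      simp only [Algebra.coe_lmul_eq_mul, LinearMap.mul_apply', ← mul_assoc, he.eq]⟩
  exact hproj.trace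

theorem finrank_range_lmul_pos {e : B} (he : e ≠ 0) :
    0 < finrank K (LinearMap.range (Algebra.lmul K B e)) := by
  refine Nat.pos_of_ne_zero fun h => he ?_
  have := Submodule.finrank_eq_zero.mp h ▸ LinearMap.mem_range_self (Algebra.lmul K B e) 1
  simpa using this

end Idempotent

theorem natCast_ne_zero_of_le_of_charP {K : Type*} [Field K] {m N : ℕ}
    (hchar : CharP K 0 ∨ ∃ p : ℕ, CharP K p ∧ N < p) (hm : 0 < m) (hmN : m ≤ N) :
    (m : K) ≠ 0 := by
  rcases hchar with h0 | ⟨p, hp, hNp⟩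
  · have : CharZero K := CharP.charP_to_charZero K
    exact Nat.cast_ne_zero.mpr hm.ne'
  · rw [ne_eq, CharP.cast_eq_zero_iff K p]
    exact fun hdvd => absurd (Nat.le_of_dvd hm hdvd) (by omega)

theorem Algebra.traceForm_nondegenerate_of_trace_idempotent_ne_zero {K B : Type*} [Field K]
    [CommRing B] [Algebra K B] [FiniteDimensional K B] [IsReduced B]
    (htr : ∀ e : B, IsIdempotentElem e → e ≠ 0 → Algebra.trace K B e ≠ 0) :
    (Algebra.traceForm K B).Nondegenerate := by
  have hrefl : LinearMap.IsRefl (Algebra.traceForm K B) := (Algebra.traceForm_isSymm K).isRefl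
  refine hrefl.nondegenerate_iff_separatingLeft.mpr ?_
  intro x hx
  have : IsArtinianRing B := isArtinian_of_tower K inferInstance
  have : IsSemisimpleRing B := IsArtinianRing.isSemisimpleRing_of_isReduced B
  obtain ⟨e, he, hspan⟩ := IsSemisimpleRing.ideal_eq_span_idempotent (Ideal.span {x})
  obtain ⟨c, rfl⟩ : ∃ c, c * x = e :=
    Ideal.mem_span_singleton'.mp (hspan ▸ Ideal.mem_span_singleton_self e)
  have he0 : c * x = 0 := by
    by_contra hne
    exact htr _ he hne (by simpa [mul_comm] using hx c)
  exact Ideal.span_singleton_eq_bot.mp (by simpa [he0] using hspan)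

/-- Let `B` be a finite-dimensional commutative algebra over a field `K` of
characteristic zero, or of prime characteristic `p > [B : K]`. If `B` is reduced,
then the trace form of `B` over `K` is nondegenerate. -/
theorem stmt6 {K B : Type*} [Field K] [CommRing B] [Algebra K B]
    [FiniteDimensional K B]
    (hchar : CharP K 0 ∨ ∃ p : ℕ, p.Prime ∧ CharP K p ∧ Module.finrank K B < p)
    (hred : IsReduced B) :
    (Algebra.traceForm K B).Nondegenerate := by
  have := hred
  refine Algebra.traceForm_nondegenerate_of_trace_idempotent_ne_zero fun e he he0 => ?_
  rw [Algebra.trace_eq_finrank_range_of_isIdempotentElem he]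
  exact natCast_ne_zero_of_le_of_charP (hchar.imp_right fun ⟨p, _, hp, hlt⟩ => ⟨p, hp, hlt⟩)
    (finrank_range_lmul_pos he0) (Submodule.finrank_le _)
end

section
/- Let K be a field and B a nontrivial commutative K-algebra that is finite-dimensional as a K-vector space with nondegenerate trace form over K. Then B is K-algebra isomorphic to a finite product ∏_{i=1}^r K[X]/(g_i), where each g_i ∈ K[X] is a monic separable polynomial. -/
/-!
Nilpotent elements lie in the kernel of the trace form, so `B` is a reduced Artinian ring, i.e. the
product of its residue fields `B ⧸ m`. The idempotent cutting out one factor pairs with `y` to the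
trace of `y` on that factor, so nondegeneracy of the trace form on `B` passes to every factor; a
finite field extension with nondegenerate trace form is separable, and by the primitive element
theorem it is `K[X]/(g)` for the minimal polynomial `g` of a primitive element.
-/

open Polynomial LinearMap

namespace Algebra

variable {R S : Type*} [CommRing R] [CommRing S] [Algebra R S]

theorem isReduced_of_traceForm_nondegenerate [IsReduced R]
    (h : (traceForm R S).Nondegenerate) : IsReduced S :=
  ⟨fun x hx => h.1 x fun y => by
    rw [traceForm_apply]
    exact (isNilpotent_trace_of_isNilpotent ((Commute.all x y).isNilpotent_mul_right hx)).eq_zero⟩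

theorem traceForm_congr {T : Type*} [CommRing T] [Algebra R T] (e : S ≃ₐ[R] T) :
    BilinForm.congr e.toLinearEquiv (traceForm R S) = traceForm R T := by
  ext x y
  simp [traceForm_apply, ← trace_eq_of_algEquiv e]

theorem trace_pi_single {ι : Type*} [Fintype ι] [DecidableEq ι] (A : ι → Type*)
    [∀ i, CommRing (A i)] [∀ i, Algebra R (A i)] [∀ i, Module.Free R (A i)]
    [∀ i, Module.Finite R (A i)] (i : ι) (a : A i) :
    trace R (∀ j, A j) (Pi.single i a) = trace R (A i) a := by
  have hmul : lmul R (∀ j, A j) (Pi.single i a) =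
      LinearMap.single R A i ∘ₗ (lmul R (A i) a ∘ₗ LinearMap.proj i) := by
    ext x j
    simp [Pi.single_mul_left]
  rw [trace_apply, hmul, trace_comp_comm', LinearMap.comp_assoc, proj_comp_single_same, comp_id,
    trace_apply]

theorem traceForm_nondegenerate_of_pi {ι : Type*} [Fintype ι] [DecidableEq ι] (A : ι → Type*)
    [∀ i, CommRing (A i)] [∀ i, Algebra R (A i)] [∀ i, Module.Free R (A i)]
    [∀ i, Module.Finite R (A i)] (h : (traceForm R (∀ j, A j)).Nondegenerate) (i : ι) :
    (traceForm R (A i)).Nondegenerate := by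
  refine (traceForm_isSymm (S := A i) R).isRefl.nondegenerate_iff_separatingLeft.mpr fun x hx => ?_
  have : Pi.single i x = 0 := h.1 _ fun y => by
    rw [traceForm_apply, ← Pi.single_mul_left, trace_pi_single]
    exact hx (y i)
  exact Pi.single_eq_zero_iff.mp this

end Algebra

theorem Field.exists_algEquiv_adjoinRoot (K L : Type*) [Field K] [Field L] [Algebra K L]
    [FiniteDimensional K L] [Algebra.IsSeparable K L] :
    ∃ g : K[X], g.Monic ∧ g.Separable ∧ Nonempty (L ≃ₐ[K] AdjoinRoot g) := by
  let pb := Field.powerBasisOfFiniteOfSeparable K L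
  refine ⟨minpoly K pb.gen, minpoly.monic pb.isIntegral_gen,
    Algebra.IsSeparable.isSeparable K pb.gen, ⟨(AdjoinRoot.equiv' _ pb ?_ ?_).symm⟩⟩
  · rw [AdjoinRoot.aeval_eq, AdjoinRoot.mk_self]
  · exact minpoly.aeval K pb.gen

attribute [local instance] IsArtinianRing.fieldOfSubtypeIsMaximal

theorem stmt9_general {K B : Type*} [Field K] [CommRing B] [Algebra K B]
    [FiniteDimensional K B]
    (h : (Algebra.traceForm K B).Nondegenerate) :
    ∃ (r : ℕ) (g : Fin r → Polynomial K), (∀ i, (g i).Monic ∧ (g i).Separable) ∧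
      Nonempty (B ≃ₐ[K] ∀ i, AdjoinRoot (g i)) := by
  classical
  have : IsReduced B := Algebra.isReduced_of_traceForm_nondegenerate h
  have : IsArtinianRing B := isArtinian_of_tower K inferInstance
  have := Fintype.ofFinite (MaximalSpectrum B)
  let e : B ≃ₐ[K] ∀ m : MaximalSpectrum B, B ⧸ m.asIdeal :=
    (IsArtinianRing.equivPi B).restrictScalars K
  have hpi : (Algebra.traceForm K (∀ m : MaximalSpectrum B, B ⧸ m.asIdeal)).Nondegenerate := by
    rw [← Algebra.traceForm_congr e]
    exact h.congr _
  have hsep (m : MaximalSpectrum B) : Algebra.IsSeparable K (B ⧸ m.asIdeal) :=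
    ((traceForm_nondegenerate_tfae K (B ⧸ m.asIdeal)).out 0 2).mpr
      (Algebra.traceForm_nondegenerate_of_pi _ hpi m)
  choose g hg using fun m : MaximalSpectrum B => Field.exists_algEquiv_adjoinRoot K (B ⧸ m.asIdeal)
  let σ := Finite.equivFin (MaximalSpectrum B)
  refine ⟨_, fun i => g (σ.symm i), fun i => ⟨(hg _).1, (hg _).2.1⟩, ⟨?_⟩⟩
  exact e.trans <| (AlgEquiv.piCongrRight fun m => (hg m).2.2.some).trans
    (AlgEquiv.piCongrLeft K (fun m => AdjoinRoot (g m)) σ.symm).symm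

/-- A nontrivial finite-dimensional commutative algebra `B` over a field `K` with
nondegenerate trace form is isomorphic to a finite product of algebras `K[X]/(gᵢ)`
for monic separable polynomials `gᵢ`. -/
theorem stmt9 {K B : Type*} [Field K] [CommRing B] [Nontrivial B] [Algebra K B]
    [FiniteDimensional K B]
    (h : (Algebra.traceForm K B).Nondegenerate) :
    ∃ (r : ℕ) (g : Fin r → Polynomial K), (∀ i, (g i).Monic ∧ (g i).Separable) ∧
      Nonempty (B ≃ₐ[K] ∀ i, AdjoinRoot (g i)) :=
  stmt9_general h
end

section
/- Let k be a commutative ring, k' a commutative k-algebra that is faithfully flat as a k-module, A a finitely presented commutative k-algebra, and A' = k' ⊗_k A the base change. If A' is formally unramified over k', then A is formally unramified over k; and if A' is étale over k', then A is étale over k. -/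
open scoped TensorProduct

universe u

theorem stmt13_general {k k' A : Type u} [CommRing k] [CommRing k'] [CommRing A]
    [Algebra k k'] [Algebra k A] [Module.FaithfullyFlat k k'] :
    (Algebra.FormallyUnramified k' (k' ⊗[k] A) → Algebra.FormallyUnramified k A) ∧
    (Algebra.Etale k' (k' ⊗[k] A) → Algebra.Etale k A) :=
  ⟨fun _ ↦ .of_formallyUnramified_tensorProduct_of_faithfullyFlat k',
    fun _ ↦ .of_etale_tensorProduct_of_faithfullyFlat k'⟩

/-- Faithfully flat descent of (formal) unramifiedness and étaleness: if `k'` is a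
faithfully flat `k`-algebra and `A` a finitely presented `k`-algebra such that
`A' = k' ⊗[k] A` is formally unramified (resp. étale) over `k'`, then `A` is
formally unramified (resp. étale) over `k`. -/
theorem stmt13 {k k' A : Type u} [CommRing k] [CommRing k'] [CommRing A]
    [Algebra k k'] [Algebra k A] [Module.FaithfullyFlat k k']
    (hA : Algebra.FinitePresentation k A) :
    (Algebra.FormallyUnramified k' (k' ⊗[k] A) → Algebra.FormallyUnramified k A) ∧
    (Algebra.Etale k' (k' ⊗[k] A) → Algebra.Etale k A) :=
  stmt13_general
end

section
/- Let K be a field and A a commutative K-algebra that is finite-dimensional as a K-vector space and formally unramified over K (i.e. Ω_{A/K} = 0). Then A is a reduced ring. -/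
theorem aux14 {K : Type u} {A : Type v} [Field K] [CommRing A] [Algebra K A]
    [FiniteDimensional K A] [Algebra.FormallyUnramified K A] : IsReduced A := by
  letI : Algebra (ULift.{v} K) A :=
    Algebra.ofModule (fun r x y => smul_mul_assoc r.down x y)
      (fun r x y => mul_smul_comm r.down x y)
  letI : Algebra (ULift.{v} K) K :=
    Algebra.ofModule (fun r x y => smul_mul_assoc r.down x y)
      (fun r x y => mul_smul_comm r.down x y)
  letI : Algebra (ULift.{v} K) (ULift.{u} A) :=
    Algebra.ofModule (fun r x y => smul_mul_assoc r.down x y)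
      (fun r x y => mul_smul_comm r.down x y)
  haveI t1 : IsScalarTower (ULift.{v} K) K A := IsScalarTower.of_algebraMap_eq fun x => by
    show x.down • (1 : A) = algebraMap K A (x.down • (1 : K))
    simp [Algebra.smul_def]
  haveI t2 : IsScalarTower (ULift.{v} K) K (ULift.{u} A) :=
    IsScalarTower.of_algebraMap_eq fun x => by
      refine ULift.down_injective ?_
      show (x.down • (1 : ULift.{u} A)).down = (algebraMap K (ULift.{u} A) (x.down • (1:K))).down
      simp [Algebra.smul_def]
  letI e : A ≃ₐ[K] ULift.{u} A :=
    { ULift.ringEquiv.symm with commutes' := fun r => rfl }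
  haveI : Algebra.FormallyUnramified K (ULift.{u} A) :=
    Algebra.FormallyUnramified.of_equiv e
  letI eK : ULift.{v} K ≃ₐ[ULift.{v} K] K :=
    { ULift.ringEquiv with
      commutes' := fun r => by
        show r.down = r • (1 : K)
        simp }
  haveI : Algebra.FormallyUnramified (ULift.{v} K) K :=
    Algebra.FormallyUnramified.of_equiv eK
  haveI : Algebra.FormallyUnramified (ULift.{v} K) (ULift.{u} A) :=
    Algebra.FormallyUnramified.comp (ULift.{v} K) K (ULift.{u} A)
  haveI : Module.Finite (ULift.{v} K) (ULift.{v} K) := Module.Finite.self _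
  haveI : Module.Finite (ULift.{v} K) K :=
    Module.Finite.of_surjective (Algebra.linearMap (ULift.{v} K) K)
      (fun x => ⟨ULift.up x, mul_one x⟩)
  haveI : Module.Finite K (ULift.{u} A) :=
    Module.Finite.equiv (ULift.moduleEquiv (R := K) (M := A)).symm
  haveI : Module.Finite (ULift.{v} K) (ULift.{u} A) :=
    Module.Finite.trans K (ULift.{u} A)
  haveI : Algebra.EssFiniteType (ULift.{v} K) (ULift.{u} A) := inferInstance
  haveI : IsReduced (ULift.{u} A) :=
    Algebra.FormallyUnramified.isReduced_of_field (ULift.{v} K) (ULift.{u} A)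
  constructor
  intro x hx
  have h1 := hx.map (ULift.ringEquiv.symm : A ≃+* ULift.{u} A)
  exact congrArg ULift.down h1.eq_zero

/-- A finite-dimensional commutative algebra `A` over a field `K` with `Ω_{A/K} = 0`
is reduced. -/
theorem stmt14 {K A : Type*} [Field K] [CommRing A] [Algebra K A]
    [FiniteDimensional K A]
    (h : Subsingleton (KaehlerDifferential K A)) : IsReduced A := by
  haveI : Algebra.FormallyUnramified K A := ⟨h⟩
  exact aux14 (K := K) (A := A)
end

section
/- Let k be a commutative ring and A a commutative k-algebra that is finitely presented as a k-algebra, free of finite rank > 0 as a k-module with basis b, and formally unramified over k (i.e. Ω_{A/k} = 0). Then A is trace-étale over k: the discriminant of the basis b, i.e. the determinant of the matrix (Tr_{A/k}(b_i·b_j)), is a unit of k. -/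
/-!
Since `A` is finite and formally unramified, `Ω_{A/k} = 0` yields an element `t ∈ A ⊗[k] A`
with `(1 ⊗ s) t = (s ⊗ 1) t` for all `s` and `μ t = 1`, where `μ` is multiplication.
Slicing `t` by a functional `f` in its right factor gives `c_f ∈ A` with
`Tr (s * c_f) = f s`: multiplication by `s * c_f` is the endomorphism `a ↦ (id ⊗ g)((1 ⊗ a) t)`
for `g = f ∘ (s * ·)`, whose trace is `g (μ t) = f s`. Hence the trace form maps `A` onto its
dual, so the trace matrix has a right inverse.
-/

open TensorProduct

section Slice

variable {k A : Type*} [CommRing k] [CommRing A] [Algebra k A]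

noncomputable def rightSlice (f : A →ₗ[k] k) : A ⊗[k] A →ₗ[k] A :=
  (TensorProduct.rid k A).toLinearMap ∘ₗ f.lTensor A

@[simp]
lemma rightSlice_tmul (f : A →ₗ[k] k) (u v : A) : rightSlice f (u ⊗ₜ v) = f v • u := by
  simp [rightSlice]

lemma rightSlice_tmul_one_mul (f : A →ₗ[k] k) (s : A) (z : A ⊗[k] A) :
    rightSlice f ((s ⊗ₜ (1 : A)) * z) = s * rightSlice f z := by
  induction z using TensorProduct.induction_on with
  | zero => simp
  | tmul u v => simp [Algebra.TensorProduct.tmul_mul_tmul]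
  | add z₁ z₂ h₁ h₂ => simp [mul_add, h₁, h₂]

lemma rightSlice_one_tmul_mul (f : A →ₗ[k] k) (s : A) (z : A ⊗[k] A) :
    rightSlice f (((1 : A) ⊗ₜ s) * z) = rightSlice (f ∘ₗ LinearMap.mul k A s) z := by
  induction z using TensorProduct.induction_on with
  | zero => simp
  | tmul u v => simp [Algebra.TensorProduct.tmul_mul_tmul]
  | add z₁ z₂ h₁ h₂ => simp [mul_add, h₁, h₂]

/-- `sliceEnd g (u ⊗ v)` is the rank-one endomorphism `a ↦ g (v * a) • u`. -/
noncomputable def sliceEnd (g : A →ₗ[k] k) : A ⊗[k] A →ₗ[k] Module.End k A :=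
  dualTensorHom k A A ∘ₗ (TensorProduct.comm k A (Module.Dual k A)).toLinearMap ∘ₗ
    ((LinearMap.mul k A).compr₂ g).lTensor A

lemma sliceEnd_apply (g : A →ₗ[k] k) (z : A ⊗[k] A) (a : A) :
    sliceEnd g z a = rightSlice g (((1 : A) ⊗ₜ a) * z) := by
  induction z using TensorProduct.induction_on with
  | zero => simp
  | tmul u v => simp [sliceEnd, Algebra.TensorProduct.tmul_mul_tmul, mul_comm]
  | add z₁ z₂ h₁ h₂ => simp [mul_add, h₁, h₂]

lemma trace_sliceEnd [Module.Free k A] [Module.Finite k A] (g : A →ₗ[k] k) (z : A ⊗[k] A) :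
    LinearMap.trace k A (sliceEnd g z) = g (Algebra.TensorProduct.lmul' k z) := by
  induction z using TensorProduct.induction_on with
  | zero => simp
  | tmul u v => simp [sliceEnd, LinearMap.trace_eq_contract_apply, mul_comm]
  | add z₁ z₂ h₁ h₂ => simp [h₁, h₂]

lemma trace_mul_rightSlice [Module.Free k A] [Module.Finite k A] {t : A ⊗[k] A}
    (ht : ∀ s : A, ((1 : A) ⊗ₜ s - s ⊗ₜ (1 : A)) * t = 0)
    (ht₁ : Algebra.TensorProduct.lmul' k t = 1) (f : A →ₗ[k] k) (s : A) :
    Algebra.trace k A (s * rightSlice f t) = f s := by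
  have hswap : ∀ a : A, ((1 : A) ⊗ₜ a) * t = (a ⊗ₜ (1 : A)) * t := fun a =>
    sub_eq_zero.mp (by rw [← sub_mul, ht])
  set g := f ∘ₗ LinearMap.mul k A s
  have hlmul : Algebra.lmul k A (rightSlice g t) = sliceEnd g t := by
    ext a
    rw [sliceEnd_apply, hswap, rightSlice_tmul_one_mul]
    exact mul_comm _ _
  calc Algebra.trace k A (s * rightSlice f t)
      = Algebra.trace k A (rightSlice g t) := by
        rw [← rightSlice_tmul_one_mul, ← hswap, rightSlice_one_tmul_mul]
    _ = g (Algebra.TensorProduct.lmul' k t) := by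
        rw [Algebra.trace_apply, hlmul, trace_sliceEnd]
    _ = f s := by simp [g, ht₁]

end Slice

lemma isUnit_det_traceMatrix_of_forall_exists {k A ι : Type*} [CommRing k] [CommRing A]
    [Algebra k A] [Fintype ι] [DecidableEq ι] (b : Module.Basis ι k A)
    (hsurj : ∀ f : A →ₗ[k] k, ∃ c : A, ∀ s, Algebra.trace k A (s * c) = f s) :
    IsUnit (Algebra.traceMatrix k b).det := by
  choose c hc using hsurj
  let N : Matrix ι ι k := .of fun l j => b.repr (c (b.coord j)) l
  refine Matrix.isUnit_det_of_right_inverse (B := N) (Matrix.ext fun i j => ?_)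
  calc (Algebra.traceMatrix k b * N) i j
      = Algebra.trace k A (b i * c (b.coord j)) := by
        conv_rhs => rw [← b.sum_repr (c (b.coord j))]
        simp only [N, Matrix.mul_apply, Algebra.traceMatrix_apply, Algebra.traceForm_apply,
          Matrix.of_apply, Finset.mul_sum, map_sum, mul_smul_comm, map_smul, smul_eq_mul, mul_comm]
    _ = (1 : Matrix ι ι k) i j := by
        simp [hc, Finsupp.single_apply, Matrix.one_apply]

theorem stmt15_general {k A : Type*} [CommRing k] [CommRing A] [Algebra k A]
    {m : ℕ} (b : Module.Basis (Fin m) k A)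
    (h : Subsingleton (KaehlerDifferential k A)) :
    IsUnit (Matrix.det (Algebra.traceMatrix k b)) := by
  have : Module.Finite k A := .of_basis b
  have : Module.Free k A := .of_basis b
  obtain ⟨t, ht, ht₁⟩ :=
    Algebra.FormallyUnramified.iff_exists_tensorProduct.mp (⟨h⟩ : Algebra.FormallyUnramified k A)
  exact isUnit_det_traceMatrix_of_forall_exists b fun f =>
    ⟨rightSlice f t, trace_mul_rightSlice ht ht₁ f⟩

/-- A finitely presented commutative `k`-algebra `A`, free of finite rank `> 0` as a
`k`-module with basis `b`, and formally unramified over `k` (`Ω_{A/k} = 0`), is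
trace-étale: the discriminant of the basis `b` (the determinant of the trace matrix
`(Tr_{A/k}(bᵢ·bⱼ))`) is a unit of `k`. -/
theorem stmt15 {k A : Type*} [CommRing k] [CommRing A] [Algebra k A]
    {m : ℕ} (hm : 0 < m) (b : Module.Basis (Fin m) k A)
    (hfp : Algebra.FinitePresentation k A)
    (h : Subsingleton (KaehlerDifferential k A)) :
    IsUnit (Matrix.det (Algebra.traceMatrix k b)) :=
  stmt15_general b h
end

section
/- Let K be a field, f₁, ..., f_s ∈ K[X₁, ..., X_n], and A = K[X₁, ..., X_n]/(f₁, ..., f_s) the quotient algebra. If Ω_{A/K} = 0, then the Krull dimension of A is at most 0. -/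
/-! An algebra of finite type over a field with vanishing Kähler differentials is a finite
product of finite separable field extensions, in particular finite-dimensional; a
finite-dimensional algebra is Artinian, so all its primes are maximal. -/

theorem Algebra.FormallyUnramified.ringKrullDim_nonpos (K A : Type*) [Field K] [CommRing A]
    [Algebra K A] [Algebra.FormallyUnramified K A] [Algebra.FiniteType K A] :
    ringKrullDim A ≤ 0 := by
  have : Module.Finite K A := Algebra.FormallyUnramified.finite_of_free K A
  have : IsArtinianRing A := IsArtinianRing.of_finite K A
  exact Ring.krullDimLE_iff.mp inferInstance

/-- If `A = K[X₁,...,Xₙ]/(f₁,...,f_s)` over a field `K` satisfies `Ω_{A/K} = 0`,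
then the Krull dimension of `A` is at most `0`. -/
theorem stmt18 {K : Type*} [Field K] {n s : ℕ}
    (f : Fin s → MvPolynomial (Fin n) K)
    (h : Subsingleton
      (KaehlerDifferential K (MvPolynomial (Fin n) K ⧸ Ideal.span (Set.range f)))) :
    ringKrullDim (MvPolynomial (Fin n) K ⧸ Ideal.span (Set.range f)) ≤ 0 := by
  have : Algebra.FormallyUnramified K (MvPolynomial (Fin n) K ⧸ Ideal.span (Set.range f)) := ⟨h⟩
  exact Algebra.FormallyUnramified.ringKrullDim_nonpos K _
end
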